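/- Let 𝔤 be a Lie algebra over ℂ with a non-degenerate symmetric invariant bilinear form ⟨·,·⟩, and let Γ be a group of automorphisms of (𝔤, ⟨·,·⟩) such that for any u, v ∈ 𝔤, [gu,v] = 0 and ⟨gu,v⟩ = 0 for all but finitely many g ∈ Γ. Then the assignment g·(a ⊗ p(t) + λk) = ga ⊗ p(g⁻¹(t)) + λk, for g ∈ Γ, a ∈ 𝔤, p(t) ∈ ℂ((t⁻¹)), λ ∈ ℂ (where g(t) := Ψ(g)(t) for a fixed group homomorphism Ψ: Γ → G), defines a left action of Γ on the Lie algebra ĝ(∞) = (𝔤 ⊗ ℂ((t⁻¹))) ⊕ ℂk by Lie algebra automorphisms, and for any u, v ∈ ĝ(∞) one has [gu, v] = 0 for all but finitely many g ∈ Γ. -/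

import Mathlib

open MvPolynomial

noncomputable section

/-- Generalized binomial coefficient `C(n, k)` for `n : ℤ`, as a complex number. -/
def zchoose (n : ℤ) (k : ℕ) : ℂ :=
  (∏ j ∈ Finset.range k, ((n : ℂ) - (j : ℂ))) / (Nat.factorial k : ℂ)

section TwoVar

variable {W : Type} [AddCommGroup W] [Module ℂ W]

/-- For a two-variable formal series `Σ F m n x₁^{-m-1} x₂^{-n-1}` with coefficients in a
ℂ-module, this is the coefficient of `x₁^{-m-1} x₂^{-n-1}` in its product with the
polynomial `p(x₁,x₂)`. -/
def polyMul (p : MvPolynomial (Fin 2) ℂ) (F : ℤ → ℤ → W) (m n : ℤ) : W :=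
  ∑ᶠ d : Fin 2 →₀ ℕ, p.coeff d • F (m + d 0) (n + d 1)

/-- For `A(x₁,x₂) = Σ F m n x₁^{-m-1} x₂^{-n-1}`, the coefficient of `x₀^{-k-1} x₂^{-l-1}`
in the substitution `A(x₂+x₀, x₂)`, where `(x₂+x₀)^{-m-1}` is expanded in nonnegative
powers of `x₀`.  It is nonzero only for `k < 0` (nonnegative powers of `x₀`). -/
def substX1 (F : ℤ → ℤ → W) (k l : ℤ) : W :=
  if k < 0 then ∑ᶠ m : ℤ, zchoose (-m-1) (-k-1).toNat • F m (l - m + k) else 0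

/-- `p(x₀+x₂, x₂)` as a polynomial in the variables `(x₀, x₂)`, for `p` a polynomial in
variables `(x₁, x₂)`. -/
def substPoly (p : MvPolynomial (Fin 2) ℂ) : MvPolynomial (Fin 2) ℂ :=
  MvPolynomial.aeval ![X 0 + X 1, X 1] p

end TwoVar

section Eo

variable {W : Type} [AddCommGroup W] [Module ℂ W]

/-- The identity operator `1_W`, viewed as the element `1_W x^0` of `ℰᵒ(W)`;
its coefficient at `x^{-n-1}` is `1` iff `n = -1`. -/
def idSeries : ℤ → Module.End ℂ W := fun n => if n = -1 then 1 else 0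

/-- `a(x) = Σ aₙ x^{-n-1}` lies in `ℰᵒ(W) = Hom(W, W((x⁻¹)))`:  for each `w`, the
coefficients `aₙ w` vanish for `n` sufficiently negative (finitely many positive
powers of `x`). -/
def IsEo (a : ℤ → Module.End ℂ W) : Prop := ∀ w : W, ∃ N : ℤ, ∀ n < N, a n w = 0

/-- `p(x₁,x₂) a(x₁) b(x₂) ∈ Hom(W, W((x₁⁻¹, x₂⁻¹)))`. -/
def Compat (p : MvPolynomial (Fin 2) ℂ) (a b : ℤ → Module.End ℂ W) : Prop :=
  ∀ w : W, ∃ N : ℤ, ∀ m n : ℤ, (m < N ∨ n < N) →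
    polyMul p (fun m n => a m (b n w)) m n = 0

/-- Weak associativity for the polynomial `p`:
`(p(x₁,x₂) a(x₁) b(x₂))|_{x₁ = x₂+x₀} = p(x₀+x₂,x₂) ⬝ Σ_{k,l} c k l x₀^{-k-1} x₂^{-l-1}`. -/
def AssocEq (p : MvPolynomial (Fin 2) ℂ) (a b : ℤ → Module.End ℂ W)
    (c : ℤ → ℤ → Module.End ℂ W) : Prop :=
  ∀ (w : W) (k l : ℤ),
    substX1 (polyMul p (fun m n => a m (b n w))) k l
      = polyMul (substPoly p) (fun k l => c k l w) k l

/-- `c` is the family of products `Y_{ℰᵒ}(a(x),x₀)b(x) = Σ_n (a(x)_n b(x)) x₀^{-n-1}`: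
`c n l` is the coefficient of `x^{-l-1}` in `a(x)_n b(x)`.  It is characterized by:
truncation in `x₀`, each `a(x)_n b(x) ∈ ℰᵒ(W)`, and for every nonzero compatible
polynomial `p`, `p(x+x₀,x) Y_{ℰᵒ}(a(x),x₀)b(x) = (p(x₁,x)a(x₁)b(x))|_{x₁=x+x₀}`. -/
def IsYEoProd (a b : ℤ → Module.End ℂ W) (c : ℤ → ℤ → Module.End ℂ W) : Prop :=
  (∀ w : W, ∃ N : ℤ, ∀ n : ℤ, N ≤ n → ∀ l : ℤ, c n l w = 0) ∧
  (∀ (w : W) (n : ℤ), ∃ M : ℤ, ∀ l < M, c n l w = 0) ∧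
  ∀ p : MvPolynomial (Fin 2) ℂ, p ≠ 0 → Compat p a b →
    ∀ (w : W) (k l : ℤ),
      polyMul (substPoly p) (fun n l => c n l w) k l
        = substX1 (polyMul p (fun m n => a m (b n w))) k l

end Eo

/-- A vertex algebra over ℂ, with vertex operator map `Y(v,x) = Σ_n (Y v n) x^{-n-1}`,
vacuum `one`, truncation, vacuum and creation properties, and the Jacobi identity in
component form. -/
structure VertexAlg (V : Type) [AddCommGroup V] [Module ℂ V] where
  Y : V →ₗ[ℂ] (ℤ → Module.End ℂ V)
  one : V
  trunc : ∀ u v : V, ∃ N : ℤ, ∀ n : ℤ, N ≤ n → Y u n v = 0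
  vacuum : ∀ n : ℤ, Y one n = if n = -1 then 1 else 0
  creation_neg : ∀ v : V, Y v (-1) one = v
  creation : ∀ v : V, ∀ n : ℤ, 0 ≤ n → Y v n one = 0
  jacobi : ∀ u v w : V, ∀ m n k : ℤ,
    (∑ᶠ i : ℕ, ((-1:ℂ)^i * zchoose k i) • Y u (m + k - i) (Y v (n + i) w))
      - (-1:ℂ)^k • (∑ᶠ i : ℕ, ((-1:ℂ)^i * zchoose k i) • Y v (n + k - i) (Y u (m + i) w))
    = ∑ᶠ i : ℕ, zchoose m i • Y (Y u (k + i) v) (m + n - i) w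

/-- A quasi module at infinity for a vertex algebra `VA` on `V`:  a linear map
`Y_W : V → ℰᵒ(W)` with `Y_W(𝟏,x) = 1_W`, such that for any `u,v` there is a nonzero
polynomial `p(x₁,x₂)` with `p(x₁,x₂)Y_W(u,x₁)Y_W(v,x₂) ∈ Hom(W,W((x₁⁻¹,x₂⁻¹)))` and
`(p(x₁,x₂)Y_W(u,x₁)Y_W(v,x₂))|_{x₁=x₂+x₀} = p(x₀+x₂,x₂)Y_W(Y(u,x₀)v,x₂)`. -/
structure QModInf {V : Type} [AddCommGroup V] [Module ℂ V] (VA : VertexAlg V)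
    (W : Type) [AddCommGroup W] [Module ℂ W] where
  Y : V →ₗ[ℂ] (ℤ → Module.End ℂ W)
  trunc : ∀ (v : V) (w : W), ∃ N : ℤ, ∀ n < N, Y v n w = 0
  vacuum : ∀ n : ℤ, Y VA.one n = if n = -1 then 1 else 0
  weak_assoc : ∀ u v : V, ∃ p : MvPolynomial (Fin 2) ℂ, p ≠ 0 ∧
    Compat p (Y u) (Y v) ∧ AssocEq p (Y u) (Y v) (fun k l => Y (VA.Y u k v) l)

section Delta

variable {W : Type} [AddCommGroup W] [Module ℂ W]

/-- The coefficient of `x₁^{a} x₂^{b}` in `(1/j!) (∂/∂x₂)^j x₁⁻¹ δ(g(x₂)/x₁)` for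
`g(x) = αx+β`, where `g(x₂)^n` is expanded in `ℂ((x₂⁻¹))`. -/
def deltaDCoeff (α β : ℂ) (j : ℕ) (a b : ℤ) : ℂ :=
  if 0 ≤ -a - 1 - j - b then
    zchoose (-a-1) (-a-1-j-b).toNat * α ^ (b + j) * β ^ (-a-1-j-b).toNat
      * zchoose (b + j) j
  else 0

/-- The coefficient of `x₁^{-m-1} x₂^{-n-1}` in
`A(x₂) ⬝ (1/j!) (∂/∂x₂)^j x₁⁻¹ δ(g(x₂)/x₁)` (with `g(x) = αx+β`), applied to `w`. -/
def mulDeltaD (A : ℤ → Module.End ℂ W) (α β : ℂ) (j : ℕ) (m n : ℤ) (w : W) : W :=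
  ∑ᶠ l : ℤ, deltaDCoeff α β j (-m-1) (l - n) • A l w

/-- The coefficient of `x^{-l-1}` in `(αx+β)^{-n-1}`, expanded in `ℂ((x⁻¹))`; so for
`a(x) ∈ ℰᵒ(W)` and `g(x) = αx+β ∈ G`, the coefficient of `x^{-l-1}` in `a(g(x))` is
`Σ_n gcoeff α β l n • aₙ`. -/
def gcoeff (α β : ℂ) (l n : ℤ) : ℂ :=
  if 0 ≤ l - n then zchoose (-n-1) (l-n).toNat * α ^ (-l-1) * β ^ (l-n).toNat else 0

end Delta

/-- A group homomorphism `Ψ : Γ → G`, where `G` is the group (under composition) of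
linear polynomials `g(x) = αx + β` with `α ∈ ℂˣ, β ∈ ℂ`; encoded by
`Ψ(g)(x) = (A g) x + B g`. -/
structure HomToG (Γ : Type) [Group Γ] where
  A : Γ →* ℂˣ
  B : Γ → ℂ
  B_one : B 1 = 0
  B_mul : ∀ g h : Γ, B (g * h) = (A g : ℂ) * B h + B g

namespace HomToG

variable {Γ : Type} [Group Γ]

/-- The leading coefficient of `Ψ(g)⁻¹(x) = α⁻¹ x - α⁻¹ β`. -/
def invA (Ψ : HomToG Γ) (g : Γ) : ℂ := (Ψ.A g : ℂ)⁻¹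

/-- The constant coefficient of `Ψ(g)⁻¹(x) = α⁻¹ x - α⁻¹ β`. -/
def invB (Ψ : HomToG Γ) (g : Γ) : ℂ := -((Ψ.A g : ℂ)⁻¹) * Ψ.B g

end HomToG

/-- The polynomial `∏_{σ ∈ s} (x₁ - Ψ(σ)(x₂))`, a product of linear factors
`x₁ - g(x₂)` with `g ∈ Ψ(Γ)` (with multiplicities). -/
def gpoly {Γ : Type} [Group Γ] (Ψ : HomToG Γ) (s : Multiset Γ) :
    MvPolynomial (Fin 2) ℂ :=
  (s.map fun σ => X 0 - (C ((Ψ.A σ : ℂ)) * X 1 + C (Ψ.B σ))).prod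

/-- A vertex `Γ`-algebra: a vertex algebra `V` equipped with group homomorphisms
`L : Γ → GL(V)` and `φ : Γ → ℂˣ` such that `L(g)𝟏 = 𝟏` and
`L(g)Y(u,x)v = Y(L(g)u, φ(g)x) L(g)v`. -/
structure VertexGammaAlg (Γ : Type) [Group Γ] (V : Type) [AddCommGroup V]
    [Module ℂ V] extends VertexAlg V where
  L : Γ →* (V ≃ₗ[ℂ] V)
  phi : Γ →* ℂˣ
  L_vac : ∀ g : Γ, L g one = one
  L_Y : ∀ (g : Γ) (u v : V) (n : ℤ),
    L g (Y u n v) = ((phi g : ℂ) ^ (-n-1 : ℤ)) • Y (L g u) n (L g v)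

/-- A quasi module at infinity for a vertex `Γ`-algebra `GV`: a quasi module at
infinity for the underlying vertex algebra, together with a group homomorphism
`Ψ : Γ → G` with `Φ ∘ Ψ = φ`, satisfying the covariance
`Y_W(L(g)v, x) = Y_W(v, Ψ(g)⁻¹(x))` and `Ψ(Γ)`-locality. -/
structure GQModInf (Γ : Type) [Group Γ] {V : Type} [AddCommGroup V] [Module ℂ V]
    (GV : VertexGammaAlg Γ V) (W : Type) [AddCommGroup W] [Module ℂ W]
    extends QModInf GV.toVertexAlg W where
  Psi : HomToG Γ
  phi_eq : Psi.A = GV.phi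
  covariance : ∀ (g : Γ) (v : V) (l : ℤ) (w : W),
    Y (GV.L g v) l w = ∑ᶠ n : ℤ, gcoeff (Psi.invA g) (Psi.invB g) l n • Y v n w
  gammaLocal : ∀ u v : V, ∃ s : Multiset Γ, ∀ m n : ℤ,
    polyMul (gpoly Psi s) (fun m n => Y u m * Y v n - Y v n * Y u m) m n = 0

section LieInf

/-- The coefficient of `t^i` in `(αt+β)^m`, expanded in `ℂ((t⁻¹))`. -/
def gco (α β : ℂ) (m i : ℤ) : ℂ :=
  if 0 ≤ m - i then zchoose m (m-i).toNat * α ^ i * β ^ (m-i).toNat else 0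

/-- `p = Σ pₙ tⁿ` lies in `ℂ((t⁻¹))`: upper truncated in `t`. -/
def KTrunc (p : ℤ → ℂ) : Prop := ∃ N : ℤ, ∀ n : ℤ, N < n → p n = 0

/-- The coefficients of `p(αt+β)` for `p = Σ pₘ tᵐ ∈ ℂ((t⁻¹))`. -/
def substK (α β : ℂ) (p : ℤ → ℂ) : ℤ → ℂ := fun i => ∑ᶠ m : ℤ, gco α β m i * p m

variable {𝔤 : Type} [LieRing 𝔤] [LieAlgebra ℂ 𝔤]

/-- The element `a ⊗ p(t)` of `ĝ(∞) = (𝔤 ⊗ ℂ((t⁻¹))) ⊕ ℂk`, realized inside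
`(ℤ → 𝔤) × ℂ` via coefficient functions: the `t^n`-coefficient is `p n • a`. -/
def elemT (a : 𝔤) (p : ℤ → ℂ) : (ℤ → 𝔤) × ℂ := (fun n => p n • a, 0)

/-- The central element `k`. -/
def kvec {𝔤 : Type} [LieRing 𝔤] [LieAlgebra ℂ 𝔤] : (ℤ → 𝔤) × ℂ := (0, 1)

/-- The coefficient function of `tⁿ ∈ ℂ((t⁻¹))`. -/
def tpow (n : ℤ) : ℤ → ℂ := fun m => if m = n then 1 else 0

/-- `ĝ(∞) = (𝔤 ⊗ ℂ((t⁻¹))) ⊕ ℂ k`, realized as the span of the elements `a ⊗ p(t)`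
(`p` truncated) and `k` inside `(ℤ → 𝔤) × ℂ`. -/
def Ehat (𝔤 : Type) [LieRing 𝔤] [LieAlgebra ℂ 𝔤] : Submodule ℂ ((ℤ → 𝔤) × ℂ) :=
  Submodule.span ℂ ({x | ∃ (a : 𝔤) (p : ℤ → ℂ), KTrunc p ∧ x = elemT a p} ∪ {kvec})

lemma elemT_mem (a : 𝔤) (p : ℤ → ℂ) (hp : KTrunc p) : elemT a p ∈ Ehat 𝔤 :=
  Submodule.subset_span (Or.inl ⟨a, p, hp, rfl⟩)

lemma kvec_mem : (kvec : (ℤ → 𝔤) × ℂ) ∈ Ehat 𝔤 :=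
  Submodule.subset_span (Or.inr rfl)

lemma tpow_trunc (n : ℤ) : KTrunc (tpow n) := ⟨n, fun m hm => if_neg (by omega)⟩

variable {Γ : Type} [Group Γ]

/-- The twisted bracket `[·,·]_Γ` on `ĝ(∞)`, given on generators by
`[a⊗p(t), b⊗q(t)]_Γ = Σ_{g∈Γ} [ga,b] ⊗ p(g⁻¹(t))q(t)
   + Res_t q(t) (d/dt)p(g⁻¹(t)) ⟨ga,b⟩ k`, and `k` central. -/
def brG (ρ : Γ →* (𝔤 ≃ₗ[ℂ] 𝔤)) (Ψ : HomToG Γ) (Bf : 𝔤 →ₗ[ℂ] 𝔤 →ₗ[ℂ] ℂ)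
    (x y : (ℤ → 𝔤) × ℂ) : (ℤ → 𝔤) × ℂ :=
  (fun n => ∑ᶠ q : Γ × ℤ × ℤ,
      gco (Ψ.invA q.1) (Ψ.invB q.1) q.2.1 (n - q.2.2) • ⁅ρ q.1 (x.1 q.2.1), y.1 q.2.2⁆,
   ∑ᶠ q : Γ × ℤ × ℤ,
      (-(q.2.2 : ℂ)) * gco (Ψ.invA q.1) (Ψ.invB q.1) q.2.1 (-q.2.2)
        * Bf (ρ q.1 (x.1 q.2.1)) (y.1 q.2.2))

/-- The subspace of `ĝ(∞)` linearly spanned by the elements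
`g a ⊗ p(t) - a ⊗ p(g(t))` for `g ∈ Γ`, `a ∈ 𝔤`, `p(t) ∈ ℂ((t⁻¹))`. -/
def Sgen (ρ : Γ →* (𝔤 ≃ₗ[ℂ] 𝔤)) (Ψ : HomToG Γ) : Submodule ℂ ((ℤ → 𝔤) × ℂ) :=
  Submodule.span ℂ {x | ∃ (g : Γ) (a : 𝔤) (p : ℤ → ℂ), KTrunc p ∧
    x = elemT (ρ g a) p - elemT a (substK ((Ψ.A g : ℂ)) (Ψ.B g) p)}

/-- The untwisted bracket of the affine-type Lie algebra `ĝ(∞)`: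
`[a⊗p(t), b⊗q(t)] = [a,b] ⊗ p(t)q(t) + Res_t p'(t)q(t) ⟨a,b⟩ k`, `k` central. -/
def br0 (Bf : 𝔤 →ₗ[ℂ] 𝔤 →ₗ[ℂ] ℂ) (x y : (ℤ → 𝔤) × ℂ) : (ℤ → 𝔤) × ℂ :=
  (fun n => ∑ᶠ i : ℤ, ⁅x.1 i, y.1 (n - i)⁆,
   ∑ᶠ i : ℤ, (i : ℂ) * Bf (x.1 i) (y.1 (-i)))

/-- The action of `g ∈ Γ` on `ĝ(∞)`: `g ⬝ (a ⊗ p(t) + λk) = ga ⊗ p(g⁻¹(t)) + λk`. -/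
def actG (ρ : Γ →* (𝔤 ≃ₗ[ℂ] 𝔤)) (Ψ : HomToG Γ) (g : Γ) (x : (ℤ → 𝔤) × ℂ) :
    (ℤ → 𝔤) × ℂ :=
  (fun n => ∑ᶠ m : ℤ, gco (Ψ.invA g) (Ψ.invB g) m n • (ρ g (x.1 m)), x.2)

end LieInf


/-!
The substitution `p(t) ↦ p(αt+β)` acts on coefficients through the expansion coefficients
`gco α β m i` of `(αt+β)^m`, and three binomial identities for them carry the whole proof:
`(αt+β)^m (αt+β)^{m'} = (αt+β)^{m+m'}` (Chu–Vandermonde), the composition rule for two affine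
substitutions, and `Res_t ((αt+β)^m)' (αt+β)^{m'} = m δ_{m+m',0}`, which follows from the first
by differentiating. Exchanging the (finite) summations, they say that the substitution is
multiplicative on `ℂ((t⁻¹))`, respects composition in `G`, and preserves `Res_t p'q`. Since
`ρ(g)` preserves the bracket and the form, `g` therefore preserves the bracket on generators
`a ⊗ p` and `k`, and everything else follows by bilinearity. For local finiteness,
`[g(a ⊗ p), b ⊗ q]` only involves `[ga, b]` and `⟨ga, b⟩`.
-/

lemma finsum_eq_sum_range_of_support {M : Type*} [AddCommMonoid M] {f : ℤ → M} {b : ℤ} {K : ℕ}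
    (hf : ∀ i, f i ≠ 0 → b - K ≤ i ∧ i ≤ b) :
    ∑ᶠ i, f i = ∑ j ∈ Finset.range (K + 1), f (b - j) := by
  rw [finsum_eq_sum_of_support_subset f (s := (Finset.range (K + 1)).image fun j : ℕ => b - j),
    Finset.sum_image fun j _ j' _ h => by omega]
  intro i hi
  obtain ⟨h₁, h₂⟩ := hf i hi
  simp only [Finset.coe_image, Finset.coe_range, Set.mem_image, Set.mem_Iio]
  exact ⟨(b - i).toNat, by omega, by omega⟩

lemma finsum_comm_of_finite {α β M : Type*} [AddCommMonoid M] {f : α → β → M}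
    (h : (Function.support fun x : α × β => f x.1 x.2).Finite) :
    ∑ᶠ a, ∑ᶠ b, f a b = ∑ᶠ b, ∑ᶠ a, f a b := by
  let e : β × α ≃ α × β := Equiv.prodComm β α
  have h' : (Function.support fun x : β × α => f x.2 x.1).Finite := h.preimage e.injective.injOn
  calc ∑ᶠ a, ∑ᶠ b, f a b = ∑ᶠ x : α × β, f x.1 x.2 := (finsum_curry _ h).symm
    _ = ∑ᶠ x : β × α, f x.2 x.1 := (finsum_comp_equiv e).symm
    _ = ∑ᶠ b, ∑ᶠ a, f a b := finsum_curry _ h'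

lemma finsum_comm₃_of_finite {α β γ M : Type*} [AddCommMonoid M] {f : α → β → γ → M}
    (h : (Function.support fun x : α × β × γ => f x.1 x.2.1 x.2.2).Finite) :
    ∑ᶠ a, ∑ᶠ b, ∑ᶠ c, f a b c = ∑ᶠ b, ∑ᶠ c, ∑ᶠ a, f a b c := by
  let e : β × γ × α ≃ α × β × γ := (Equiv.prodAssoc β γ α).symm.trans (Equiv.prodComm _ α)
  have h' : (Function.support fun x : β × γ × α => f x.2.2 x.1 x.2.1).Finite :=
    h.preimage e.injective.injOn
  calc ∑ᶠ a, ∑ᶠ b, ∑ᶠ c, f a b c = ∑ᶠ x : α × β × γ, f x.1 x.2.1 x.2.2 :=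
        (finsum_curry₃ _ h).symm
    _ = ∑ᶠ x : β × γ × α, f x.2.2 x.1 x.2.1 := (finsum_comp_equiv e).symm
    _ = ∑ᶠ b, ∑ᶠ c, ∑ᶠ a, f a b c := finsum_curry₃ _ h'

lemma le_of_ne_zero_of_trunc {M : Type*} [Zero M] {p : ℤ → M} {N : ℤ}
    (hp : ∀ n, N < n → p n = 0) {m : ℤ} (h : p m ≠ 0) : m ≤ N :=
  not_lt.mp fun hm => h (hp m hm)

lemma finite_support_of_trunc {A B N : Type*} [Zero A] [Zero B] [Zero N] {f : ℤ → A}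
    {g : ℤ → B} {Nf Ng : ℤ} (hf : ∀ n, Nf < n → f n = 0) (hg : ∀ n, Ng < n → g n = 0)
    (φ : ℤ → A → B → N) (hφ₁ : ∀ i b, φ i 0 b = 0) (hφ₂ : ∀ i a, φ i a 0 = 0) (c : ℤ) :
    (Function.support fun i => φ i (f i) (g (c - i))).Finite :=
  (Set.finite_Icc (c - Ng) Nf).subset fun i hi => by
    have := le_of_ne_zero_of_trunc hf (m := i) fun h => hi (by simp only [h, hφ₁])
    have := le_of_ne_zero_of_trunc hg (m := c - i) fun h => hi (by simp only [h, hφ₂])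
    exact ⟨by omega, by omega⟩

lemma zchoose_eq_choose (n : ℤ) (k : ℕ) : zchoose n k = Ring.choose (n : ℂ) k := by
  rw [zchoose, Ring.choose_eq_smul, ← Polynomial.aeval_eq_smeval, Polynomial.aeval_def,
    ← Polynomial.eval_map, descPochhammer_map, descPochhammer_eval_eq_prod_range,
    smul_eq_mul, div_eq_inv_mul]

lemma Ring.sub_mul_choose (x : ℂ) (k : ℕ) :
    (x - k) * Ring.choose x k = x * Ring.choose (x - 1) k := by
  have h₁ := Ring.choose_smul_choose x (Nat.le_succ k)
  have h₂ := Ring.choose_smul_choose x (n := k + 1) (k := 1) (by omega)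
  rw [Nat.succ_sub (le_refl k), Nat.sub_self, Ring.choose_one_right] at h₁
  rw [Nat.add_sub_cancel, Ring.choose_one_right, Nat.choose_one_right, Nat.cast_one] at h₂
  rw [mul_comm, ← h₁, Nat.choose_succ_self_right, h₂]

section gco

variable {α β : ℂ}

lemma gco_eq_of_sub_eq {m i : ℤ} {k : ℕ} (h : m - i = k) :
    gco α β m i = Ring.choose (m : ℂ) k * α ^ i * β ^ k := by
  rw [gco, if_pos (by omega), zchoose_eq_choose, show (m - i).toNat = k by omega]

lemma gco_of_lt {m i : ℤ} (h : m < i) : gco α β m i = 0 := if_neg (by omega)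

lemma le_of_gco_ne_zero {m i : ℤ} (h : gco α β m i ≠ 0) : i ≤ m := by
  by_contra h'
  exact h (gco_of_lt (by omega))

lemma gco_add (hα : α ≠ 0) (m m' n : ℤ) :
    ∑ᶠ i, gco α β m i * gco α β m' (n - i) = gco α β (m + m') n := by
  rcases lt_or_ge (m + m') n with hn | hn
  · rw [gco_of_lt hn]
    refine finsum_eq_zero_of_forall_eq_zero fun i => ?_
    rcases lt_or_ge m i with h | h
    · rw [gco_of_lt h, zero_mul]
    · rw [gco_of_lt (show m' < n - i by omega), mul_zero]
  obtain ⟨K, hK⟩ : ∃ K : ℕ, m + m' - n = K := ⟨(m + m' - n).toNat, by omega⟩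
  rw [finsum_eq_sum_range_of_support (b := m) (K := K) fun i hi => by
    have := le_of_gco_ne_zero (left_ne_zero_of_mul hi)
    have := le_of_gco_ne_zero (right_ne_zero_of_mul hi)
    omega]
  have hterm : ∀ j ∈ Finset.range (K + 1), gco α β m (m - j) * gco α β m' (n - (m - j))
      = Ring.choose (m : ℂ) j * Ring.choose (m' : ℂ) (K - j) * (α ^ n * β ^ K) := by
    intro j hj
    have hjK : j ≤ K := Nat.lt_succ_iff.mp (Finset.mem_range.mp hj)
    rw [gco_eq_of_sub_eq (k := j) (by ring), gco_eq_of_sub_eq (k := K - j) (by omega),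
      show α ^ n = α ^ (m - j : ℤ) * α ^ (n - (m - j)) by rw [← zpow_add₀ hα]; ring_nf,
      show β ^ K = β ^ j * β ^ (K - j) by rw [← pow_add, Nat.add_sub_cancel' hjK]]
    ring
  rw [Finset.sum_congr rfl hterm, ← Finset.sum_mul,
    ← Finset.Nat.sum_antidiagonal_eq_sum_range_succ
      (fun a b => Ring.choose (m : ℂ) a * Ring.choose (m' : ℂ) b),
    ← Ring.add_choose_eq K (Commute.all _ _), gco_eq_of_sub_eq hK]
  push_cast
  ring

lemma gco_comp (hα : α ≠ 0) (α' β' : ℂ) (m n : ℤ) :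
    ∑ᶠ i, gco α β m i * gco α' β' i n = gco (α * α') (α * β' + β) m n := by
  rcases lt_or_ge m n with hn | hn
  · rw [gco_of_lt hn]
    refine finsum_eq_zero_of_forall_eq_zero fun i => ?_
    rcases lt_or_ge m i with h | h
    · rw [gco_of_lt h, zero_mul]
    · rw [gco_of_lt (show i < n by omega), mul_zero]
  obtain ⟨K, hK⟩ : ∃ K : ℕ, m - n = K := ⟨(m - n).toNat, by omega⟩
  rw [finsum_eq_sum_range_of_support (b := m) (K := K) fun i hi => by
    have := le_of_gco_ne_zero (left_ne_zero_of_mul hi)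
    have := le_of_gco_ne_zero (right_ne_zero_of_mul hi)
    omega]
  have hterm : ∀ j ∈ Finset.range (K + 1), gco α β m (m - j) * gco α' β' (m - j) n
      = Ring.choose (m : ℂ) K * (α ^ n * α' ^ n) * (β ^ j * (α * β') ^ (K - j) * K.choose j) := by
    intro j hj
    have hjK : j ≤ K := Nat.lt_succ_iff.mp (Finset.mem_range.mp hj)
    have hchoose := Ring.choose_smul_choose (m : ℂ) hjK
    rw [nsmul_eq_mul] at hchoose
    rw [gco_eq_of_sub_eq (k := j) (by ring), gco_eq_of_sub_eq (k := K - j) (by omega),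
      show ((m - j : ℤ) : ℂ) = (m : ℂ) - j by push_cast; ring,
      show α ^ (m - j : ℤ) = α ^ n * α ^ (K - j) by
        rw [← zpow_natCast, ← zpow_add₀ hα]; congr 1; omega,
      mul_pow]
    linear_combination (-(α ^ n * β ^ j * α' ^ n * β' ^ (K - j) * α ^ (K - j))) * hchoose
  rw [Finset.sum_congr rfl hterm, ← Finset.mul_sum, ← add_pow, gco_eq_of_sub_eq hK, mul_zpow]
  ring

lemma gco_deriv (hα : α ≠ 0) (m i : ℤ) :
    (i : ℂ) * gco α β m i = m * α * gco α β (m - 1) (i - 1) := by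
  rcases lt_or_ge m i with h | h
  · rw [gco_of_lt h, gco_of_lt (show m - 1 < i - 1 by omega), mul_zero, mul_zero]
  obtain ⟨k, hk⟩ : ∃ k : ℕ, m - i = k := ⟨(m - i).toNat, by omega⟩
  rw [gco_eq_of_sub_eq hk, gco_eq_of_sub_eq (show m - 1 - (i - 1) = k by omega),
    show (i : ℂ) = m - k by rw [show i = m - k by omega]; push_cast; ring,
    show α ^ i = α * α ^ (i - 1) by rw [← zpow_one_add₀ hα]; ring_nf,
    show ((m - 1 : ℤ) : ℂ) = (m : ℂ) - 1 by push_cast; ring]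
  linear_combination (α * α ^ (i - 1) * β ^ k) * Ring.sub_mul_choose (m : ℂ) k

lemma gco_neg_one (M : ℤ) :
    gco α β M (-1) = if M = -1 then α⁻¹ else 0 := by
  rcases lt_trichotomy M (-1) with h | rfl | h
  · rw [gco_of_lt h, if_neg h.ne]
  · rw [gco_eq_of_sub_eq (k := 0) (by ring), if_pos rfl, Ring.choose_zero_right]
    simp
  · obtain ⟨k, rfl⟩ : ∃ k : ℕ, M = k := ⟨M.toNat, by omega⟩
    rw [gco_eq_of_sub_eq (k := k + 1) (by push_cast; ring), if_neg (by omega), Int.cast_natCast,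
      Ring.choose_natCast, Nat.choose_eq_zero_of_lt (Nat.lt_succ_self k)]
    simp

lemma gco_res (hα : α ≠ 0) (m m' : ℤ) :
    ∑ᶠ i : ℤ, (i : ℂ) * (gco α β m i * gco α β m' (-i)) = if m + m' = 0 then (m : ℂ) else 0 := by
  have hterm : ∀ i : ℤ, (i : ℂ) * (gco α β m i * gco α β m' (-i))
      = m * α * (gco α β (m - 1) (i - 1) * gco α β m' (-1 - (i - 1))) := by
    intro i
    rw [show -1 - (i - 1) = -i by ring, ← mul_assoc, gco_deriv hα]
    ring
  have hshift : ∑ᶠ i : ℤ, gco α β (m - 1) (i - 1) * gco α β m' (-1 - (i - 1))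
      = ∑ᶠ j : ℤ, gco α β (m - 1) j * gco α β m' (-1 - j) :=
    finsum_comp_equiv (Equiv.subRight (1 : ℤ))
      (f := fun j => gco α β (m - 1) j * gco α β m' (-1 - j))
  rw [finsum_congr hterm, ← mul_finsum, hshift, gco_add hα, gco_neg_one]
  by_cases hmm : m + m' = 0
  · rw [if_pos (by omega), if_pos hmm]
    field_simp
  · rw [if_neg (by omega), if_neg hmm, mul_zero]

lemma gco_one_zero (m n : ℤ) : gco 1 0 m n = if m = n then 1 else 0 := by
  rcases lt_or_ge m n with h | h
  · rw [gco_of_lt h, if_neg h.ne]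
  obtain ⟨k, hk⟩ : ∃ k : ℕ, m - n = k := ⟨(m - n).toNat, by omega⟩
  rw [gco_eq_of_sub_eq hk]
  rcases k with _ | k
  · rw [if_pos (by omega), Ring.choose_zero_right]
    simp
  · rw [if_neg (by omega)]
    simp

end gco

section Series

variable {α β : ℂ} {p q : ℤ → ℂ}

def seriesMul (p q : ℤ → ℂ) : ℤ → ℂ := fun n => ∑ᶠ i, p i * q (n - i)

/-- `Res_t p'(t) q(t)`. -/
def resDerivMul (p q : ℤ → ℂ) : ℂ := ∑ᶠ i : ℤ, (i : ℂ) * (p i * q (-i))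

lemma substK_eq_zero {N : ℤ} (hp : ∀ n, N < n → p n = 0) (α β : ℂ) {i : ℤ} (hi : N < i) :
    substK α β p i = 0 :=
  finsum_eq_zero_of_forall_eq_zero fun m => by
    rcases lt_or_ge m i with h | h
    · rw [gco_of_lt h, zero_mul]
    · rw [hp m (by omega), mul_zero]

lemma KTrunc.substK (hp : KTrunc p) (α β : ℂ) : KTrunc (substK α β p) :=
  let ⟨N, hN⟩ := hp
  ⟨N, fun _ hi => substK_eq_zero hN α β hi⟩

lemma KTrunc.seriesMul (hp : KTrunc p) (hq : KTrunc q) : KTrunc (seriesMul p q) := by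
  obtain ⟨Np, hNp⟩ := hp
  obtain ⟨Nq, hNq⟩ := hq
  refine ⟨Np + Nq, fun n hn => finsum_eq_zero_of_forall_eq_zero fun i => ?_⟩
  rcases lt_or_ge Np i with h | h
  · rw [hNp i h, zero_mul]
  · rw [hNq (n - i) (by omega), mul_zero]

lemma substK_substK (hα : α ≠ 0) (α' β' : ℂ) (hp : KTrunc p) :
    substK α' β' (substK α β p) = substK (α * α') (α * β' + β) p := by
  obtain ⟨N, hN⟩ := hp
  funext n
  simp only [substK, mul_finsum]
  rw [finsum_comm_of_finite]
  · refine finsum_congr fun m => ?_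
    rw [← gco_comp hα, finsum_mul]
    exact finsum_congr fun i => by ring
  · refine ((Set.finite_Icc n N).prod (Set.finite_Icc n N)).subset fun x hx => ?_
    simp only [Function.mem_support, mul_ne_zero_iff] at hx
    have := le_of_gco_ne_zero hx.1
    have := le_of_gco_ne_zero hx.2.1
    have := le_of_ne_zero_of_trunc hN hx.2.2
    simp only [Set.mem_prod, Set.mem_Icc]
    omega

lemma finsum_mul_substK_substK {Np Nq : ℤ} (hp : ∀ n, Np < n → p n = 0)
    (hq : ∀ n, Nq < n → q n = 0) (w : ℤ → ℂ) (c : ℤ) :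
    ∑ᶠ i, w i * (substK α β p i * substK α β q (c - i))
      = ∑ᶠ m, ∑ᶠ m', (∑ᶠ i, w i * (gco α β m i * gco α β m' (c - i))) * (p m * q m') := by
  simp only [substK, finsum_mul]
  simp only [mul_finsum]
  rw [finsum_comm₃_of_finite]
  · exact finsum_congr fun m => finsum_congr fun m' => finsum_congr fun i => by ring
  · refine ((Set.finite_Icc (c - Nq) Np).prod
      ((Set.finite_Icc (c - Nq) Np).prod (Set.finite_Icc (c - Np) Nq))).subset fun x hx => ?_
    simp only [Function.mem_support, mul_ne_zero_iff] at hx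
    have := le_of_gco_ne_zero hx.2.1.1
    have := le_of_gco_ne_zero hx.2.2.1
    have := le_of_ne_zero_of_trunc hp hx.2.1.2
    have := le_of_ne_zero_of_trunc hq hx.2.2.2
    simp only [Set.mem_prod, Set.mem_Icc]
    omega

lemma seriesMul_substK (hα : α ≠ 0) (hp : KTrunc p) (hq : KTrunc q) :
    seriesMul (substK α β p) (substK α β q) = substK α β (seriesMul p q) := by
  obtain ⟨Np, hNp⟩ := hp
  obtain ⟨Nq, hNq⟩ := hq
  funext n
  have hlhs := finsum_mul_substK_substK (α := α) (β := β) hNp hNq (fun _ => 1) n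
  simp only [one_mul, gco_add hα] at hlhs
  rw [seriesMul, hlhs, eq_comm]
  simp only [substK, seriesMul, mul_finsum]
  rw [finsum_comm_of_finite]
  · refine finsum_congr fun m => ?_
    rw [← finsum_comp_equiv (Equiv.addLeft m) (f := fun M => gco α β M n * (p m * q (M - m)))]
    simp only [Equiv.coe_addLeft, add_sub_cancel_left]
  · refine ((Set.finite_Icc n (Np + Nq)).prod (Set.finite_Icc (n - Nq) Np)).subset
      fun x hx => ?_
    simp only [Function.mem_support, mul_ne_zero_iff] at hx
    have := le_of_gco_ne_zero hx.1
    have := le_of_ne_zero_of_trunc hNp hx.2.1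
    have := le_of_ne_zero_of_trunc hNq hx.2.2
    simp only [Set.mem_prod, Set.mem_Icc]
    omega

lemma resDerivMul_substK (hα : α ≠ 0) (hp : KTrunc p) (hq : KTrunc q) :
    resDerivMul (substK α β p) (substK α β q) = resDerivMul p q := by
  obtain ⟨Np, hNp⟩ := hp
  obtain ⟨Nq, hNq⟩ := hq
  have h := finsum_mul_substK_substK (α := α) (β := β) hNp hNq (fun i => (i : ℂ)) 0
  simp only [zero_sub, gco_res hα] at h
  rw [resDerivMul, h]
  refine finsum_congr fun m => ?_
  rw [finsum_eq_single _ (-m) fun m' hm' => by rw [if_neg (by omega), zero_mul],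
    if_pos (by ring)]

end Series

namespace HomToG

variable {Γ : Type} [Group Γ] (Ψ : HomToG Γ)

lemma invA_ne_zero (g : Γ) : Ψ.invA g ≠ 0 := inv_ne_zero (Units.ne_zero _)

lemma invA_one : Ψ.invA 1 = 1 := by
  rw [invA, map_one, Units.val_one, inv_one]

lemma invB_one : Ψ.invB 1 = 0 := by
  rw [invB, Ψ.B_one, mul_zero]

lemma invA_mul (g h : Γ) : Ψ.invA h * Ψ.invA g = Ψ.invA (g * h) := by
  simp only [invA, map_mul, Units.val_mul, mul_inv, mul_comm]

lemma invB_mul (g h : Γ) : Ψ.invA h * Ψ.invB g + Ψ.invB h = Ψ.invB (g * h) := by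
  have hg : (Ψ.A g : ℂ) ≠ 0 := Units.ne_zero _
  have hh : (Ψ.A h : ℂ) ≠ 0 := Units.ne_zero _
  simp only [invA, invB, Ψ.B_mul, map_mul, Units.val_mul]
  field_simp
  ring

end HomToG

section Ehat

variable {𝔤 : Type} [LieRing 𝔤] [LieAlgebra ℂ 𝔤]

variable (𝔤) in
/-- Upper-truncated coefficient sequences. Only on these are the `finsum`s in `actG` and `br0`
finite sums (elsewhere they may take the junk value `0`), so additivity is proved only here. -/
def upperTrunc : Submodule ℂ ((ℤ → 𝔤) × ℂ) where
  carrier := {x | ∃ N : ℤ, ∀ n, N < n → x.1 n = 0}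
  add_mem' := by
    rintro x y ⟨N, hN⟩ ⟨M, hM⟩
    exact ⟨max N M, fun n hn => by simp [hN n (by omega), hM n (by omega)]⟩
  zero_mem' := ⟨0, fun _ _ => rfl⟩
  smul_mem' := by
    rintro c x ⟨N, hN⟩
    exact ⟨N, fun n hn => by simp [hN n hn]⟩

lemma Ehat_le_upperTrunc : Ehat 𝔤 ≤ upperTrunc 𝔤 := by
  refine Submodule.span_le.mpr ?_
  rintro _ (⟨a, p, ⟨N, hN⟩, rfl⟩ | rfl)
  · exact ⟨N, fun n hn => by simp [elemT, hN n hn]⟩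
  · exact ⟨0, fun _ _ => rfl⟩

@[elab_as_elim]
lemma Ehat.induction {P : (ℤ → 𝔤) × ℂ → Prop}
    (elem : ∀ a p, KTrunc p → P (elemT a p)) (central : P kvec)
    (add : ∀ x ∈ upperTrunc 𝔤, ∀ y ∈ upperTrunc 𝔤, P x → P y → P (x + y))
    (smul : ∀ (c : ℂ) x, P x → P (c • x)) {x : (ℤ → 𝔤) × ℂ} (hx : x ∈ Ehat 𝔤) : P x := by
  induction hx using Submodule.span_induction with
  | mem x hx =>
    rcases hx with ⟨a, p, hp, rfl⟩ | rfl
    exacts [elem a p hp, central]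
  | zero => simpa using smul 0 _ central
  | add x y hx hy hPx hPy =>
    exact add x (Ehat_le_upperTrunc hx) y (Ehat_le_upperTrunc hy) hPx hPy
  | smul c x _ hPx => exact smul c x hPx

@[elab_as_elim]
lemma Ehat.induction₂ {P : (ℤ → 𝔤) × ℂ → (ℤ → 𝔤) × ℂ → Prop}
    (elem : ∀ a p b q, KTrunc p → KTrunc q → P (elemT a p) (elemT b q))
    (central_left : ∀ y, P kvec y) (central_right : ∀ x, P x kvec)
    (add_left : ∀ x₁ ∈ upperTrunc 𝔤, ∀ x₂ ∈ upperTrunc 𝔤, ∀ y ∈ upperTrunc 𝔤,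
      P x₁ y → P x₂ y → P (x₁ + x₂) y)
    (add_right : ∀ x ∈ upperTrunc 𝔤, ∀ y₁ ∈ upperTrunc 𝔤, ∀ y₂ ∈ upperTrunc 𝔤,
      P x y₁ → P x y₂ → P x (y₁ + y₂))
    (smul_left : ∀ (c : ℂ) x y, P x y → P (c • x) y)
    (smul_right : ∀ (c : ℂ) x y, P x y → P x (c • y))
    {x y : (ℤ → 𝔤) × ℂ} (hx : x ∈ Ehat 𝔤) (hy : y ∈ Ehat 𝔤) : P x y := by
  induction hx, hy using Submodule.span_induction₂ with
  | mem_mem x y hx hy =>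
    rcases hx with ⟨a, p, hp, rfl⟩ | rfl
    · rcases hy with ⟨b, q, hq, rfl⟩ | rfl
      exacts [elem a p b q hp hq, central_right _]
    · exact central_left y
  | zero_left y _ => simpa using smul_left 0 _ y (central_left y)
  | zero_right x _ => simpa using smul_right 0 x _ (central_right x)
  | add_left x₁ x₂ y hx₁ hx₂ hy h₁ h₂ =>
    exact add_left x₁ (Ehat_le_upperTrunc hx₁) x₂ (Ehat_le_upperTrunc hx₂) y
      (Ehat_le_upperTrunc hy) h₁ h₂
  | add_right x y₁ y₂ hx hy₁ hy₂ h₁ h₂ =>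
    exact add_right x (Ehat_le_upperTrunc hx) y₁ (Ehat_le_upperTrunc hy₁) y₂
      (Ehat_le_upperTrunc hy₂) h₁ h₂
  | smul_left c x y _ _ h => exact smul_left c x y h
  | smul_right c x y _ _ h => exact smul_right c x y h

end Ehat

section Twist

variable {𝔤 : Type} [LieRing 𝔤] [LieAlgebra ℂ 𝔤]

/-- `a ⊗ p(t) + λk ↦ σa ⊗ p(αt+β) + λk`, so that `actG ρ Ψ g = twistSubst (ρ g) α β` for
`Ψ(g)⁻¹(t) = αt+β`. -/
def twistSubst (σ : 𝔤 →ₗ[ℂ] 𝔤) (α β : ℂ) (x : (ℤ → 𝔤) × ℂ) : (ℤ → 𝔤) × ℂ :=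
  (fun n => ∑ᶠ m, gco α β m n • σ (x.1 m), x.2)

variable (σ : 𝔤 →ₗ[ℂ] 𝔤) (α β : ℂ)

lemma twistSubst_elemT (a : 𝔤) (p : ℤ → ℂ) :
    twistSubst σ α β (elemT a p) = elemT (σ a) (substK α β p) := by
  refine Prod.ext (funext fun n => ?_) rfl
  simp only [twistSubst, elemT, substK, map_smul, smul_smul, finsum_smul]

lemma twistSubst_kvec : twistSubst σ α β kvec = kvec := by
  refine Prod.ext (funext fun n => ?_) rfl
  simp [twistSubst, kvec]

lemma twistSubst_smul (c : ℂ) (x : (ℤ → 𝔤) × ℂ) :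
    twistSubst σ α β (c • x) = c • twistSubst σ α β x := by
  refine Prod.ext (funext fun n => ?_) rfl
  simp only [twistSubst, Prod.smul_fst, Pi.smul_apply, map_smul, smul_finsum, smul_comm c]

lemma twistSubst_zero : twistSubst σ α β 0 = 0 := by
  simpa using twistSubst_smul σ α β 0 0

lemma finite_support_twistSubst {x : (ℤ → 𝔤) × ℂ} {N : ℤ} (hx : ∀ n, N < n → x.1 n = 0)
    (n : ℤ) : (Function.support fun m => gco α β m n • σ (x.1 m)).Finite :=
  (Set.finite_Icc n N).subset fun m hm => by
    have h₁ := le_of_gco_ne_zero (α := α) (β := β) (m := m) (i := n)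
      fun h => hm (by simp only [h, zero_smul])
    have h₂ := le_of_ne_zero_of_trunc hx (m := m)
      fun h => hm (by simp only [h, map_zero, smul_zero])
    exact ⟨h₁, h₂⟩

lemma twistSubst_add {x y : (ℤ → 𝔤) × ℂ} (hx : x ∈ upperTrunc 𝔤) (hy : y ∈ upperTrunc 𝔤) :
    twistSubst σ α β (x + y) = twistSubst σ α β x + twistSubst σ α β y := by
  obtain ⟨N, hN⟩ := hx
  obtain ⟨M, hM⟩ := hy
  refine Prod.ext (funext fun n => ?_) rfl
  simp only [twistSubst, Prod.fst_add, Pi.add_apply, map_add, smul_add]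
  exact finsum_add_distrib (finite_support_twistSubst σ α β hN n)
    (finite_support_twistSubst σ α β hM n)

lemma twistSubst_mem_upperTrunc {x : (ℤ → 𝔤) × ℂ} (hx : x ∈ upperTrunc 𝔤) :
    twistSubst σ α β x ∈ upperTrunc 𝔤 := by
  obtain ⟨N, hN⟩ := hx
  refine ⟨N, fun n hn => finsum_eq_zero_of_forall_eq_zero fun m => ?_⟩
  rcases lt_or_ge m n with h | h
  · rw [gco_of_lt h, zero_smul]
  · rw [hN m (by omega), map_zero, smul_zero]

lemma twistSubst_mem_Ehat {x : (ℤ → 𝔤) × ℂ} (hx : x ∈ Ehat 𝔤) :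
    twistSubst σ α β x ∈ Ehat 𝔤 := by
  refine Ehat.induction (fun a p hp => ?_) ?_ (fun x hx y hy hPx hPy => ?_) (fun c x hPx => ?_) hx
  · rw [twistSubst_elemT]
    exact elemT_mem _ _ (hp.substK α β)
  · rw [twistSubst_kvec]
    exact kvec_mem
  · rw [twistSubst_add σ α β hx hy]
    exact add_mem hPx hPy
  · rw [twistSubst_smul]
    exact Submodule.smul_mem _ c hPx

lemma twistSubst_one_zero (x : (ℤ → 𝔤) × ℂ) : twistSubst LinearMap.id 1 0 x = x := by
  refine Prod.ext (funext fun n => ?_) rfl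
  simp only [twistSubst, gco_one_zero, LinearMap.id_apply, ite_smul, one_smul, zero_smul]
  rw [finsum_eq_single _ n fun m hm => if_neg hm, if_pos rfl]

lemma twistSubst_twistSubst (τ : 𝔤 →ₗ[ℂ] 𝔤) {α' β' : ℂ} (hα' : α' ≠ 0)
    {x : (ℤ → 𝔤) × ℂ} (hx : x ∈ Ehat 𝔤) :
    twistSubst σ α β (twistSubst τ α' β' x) = twistSubst (σ ∘ₗ τ) (α' * α) (α' * β + β') x := by
  refine Ehat.induction (fun a p hp => ?_) ?_ (fun x hx y hy hPx hPy => ?_) (fun c x hPx => ?_) hx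
  · simp only [twistSubst_elemT, substK_substK hα' _ _ hp, LinearMap.comp_apply]
  · simp only [twistSubst_kvec]
  · rw [twistSubst_add _ _ _ hx hy, twistSubst_add _ _ _ (twistSubst_mem_upperTrunc _ _ _ hx)
      (twistSubst_mem_upperTrunc _ _ _ hy), twistSubst_add _ _ _ hx hy, hPx, hPy]
  · simp only [twistSubst_smul, hPx]

end Twist

section Bracket

variable {𝔤 : Type} [LieRing 𝔤] [LieAlgebra ℂ 𝔤] (Bf : 𝔤 →ₗ[ℂ] 𝔤 →ₗ[ℂ] ℂ)

lemma br0_elemT (a b : 𝔤) (p q : ℤ → ℂ) :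
    br0 Bf (elemT a p) (elemT b q)
      = elemT ⁅a, b⁆ (seriesMul p q) + (resDerivMul p q * Bf a b) • kvec := by
  refine Prod.ext (funext fun n => ?_) ?_
  · simp only [br0, elemT, kvec, seriesMul, lie_smul, smul_lie, smul_smul, finsum_smul,
      Prod.smul_mk, Prod.mk_add_mk, smul_zero, add_zero]
    exact finsum_congr fun i => by rw [mul_comm]
  · simp only [br0, elemT, kvec, resDerivMul, map_smul, LinearMap.smul_apply, smul_eq_mul,
      finsum_mul, Prod.smul_mk, Prod.mk_add_mk, mul_one, zero_add]
    exact finsum_congr fun i => by ring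

lemma br0_kvec_left (y : (ℤ → 𝔤) × ℂ) : br0 Bf kvec y = 0 :=
  Prod.ext (funext fun n => by simp [br0, kvec]) (by simp [br0, kvec])

lemma br0_kvec_right (x : (ℤ → 𝔤) × ℂ) : br0 Bf x kvec = 0 :=
  Prod.ext (funext fun n => by simp [br0, kvec]) (by simp [br0, kvec])

lemma br0_smul_left (c : ℂ) (x y : (ℤ → 𝔤) × ℂ) : br0 Bf (c • x) y = c • br0 Bf x y :=
  Prod.ext (funext fun n => by simp [br0, smul_finsum, smul_lie])
    (by simp [br0, mul_finsum, mul_left_comm])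

lemma br0_smul_right (c : ℂ) (x y : (ℤ → 𝔤) × ℂ) : br0 Bf x (c • y) = c • br0 Bf x y :=
  Prod.ext (funext fun n => by simp [br0, smul_finsum, lie_smul])
    (by simp [br0, mul_finsum, mul_left_comm])

variable {Bf} in
lemma br0_add_left {x₁ x₂ y : (ℤ → 𝔤) × ℂ} (hx₁ : x₁ ∈ upperTrunc 𝔤) (hx₂ : x₂ ∈ upperTrunc 𝔤)
    (hy : y ∈ upperTrunc 𝔤) : br0 Bf (x₁ + x₂) y = br0 Bf x₁ y + br0 Bf x₂ y := by
  obtain ⟨N₁, hN₁⟩ := hx₁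
  obtain ⟨N₂, hN₂⟩ := hx₂
  obtain ⟨M, hM⟩ := hy
  refine Prod.ext (funext fun n => ?_) ?_
  · simp only [br0, Prod.fst_add, Pi.add_apply, add_lie]
    exact finsum_add_distrib
      (finite_support_of_trunc hN₁ hM (fun _ a b => ⁅a, b⁆) (by simp) (by simp) n)
      (finite_support_of_trunc hN₂ hM (fun _ a b => ⁅a, b⁆) (by simp) (by simp) n)
  · have h₁ := finite_support_of_trunc hN₁ hM (fun i a b => (i : ℂ) * Bf a b) (by simp) (by simp) 0
    have h₂ := finite_support_of_trunc hN₂ hM (fun i a b => (i : ℂ) * Bf a b) (by simp) (by simp) 0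
    simp only [zero_sub] at h₁ h₂
    simp only [br0, Prod.fst_add, Pi.add_apply, map_add, LinearMap.add_apply, mul_add]
    exact finsum_add_distrib h₁ h₂

variable {Bf} in
lemma br0_add_right {x y₁ y₂ : (ℤ → 𝔤) × ℂ} (hx : x ∈ upperTrunc 𝔤) (hy₁ : y₁ ∈ upperTrunc 𝔤)
    (hy₂ : y₂ ∈ upperTrunc 𝔤) : br0 Bf x (y₁ + y₂) = br0 Bf x y₁ + br0 Bf x y₂ := by
  obtain ⟨N, hN⟩ := hx
  obtain ⟨M₁, hM₁⟩ := hy₁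
  obtain ⟨M₂, hM₂⟩ := hy₂
  refine Prod.ext (funext fun n => ?_) ?_
  · simp only [br0, Prod.fst_add, Pi.add_apply, lie_add]
    exact finsum_add_distrib
      (finite_support_of_trunc hN hM₁ (fun _ a b => ⁅a, b⁆) (by simp) (by simp) n)
      (finite_support_of_trunc hN hM₂ (fun _ a b => ⁅a, b⁆) (by simp) (by simp) n)
  · have h₁ := finite_support_of_trunc hN hM₁ (fun i a b => (i : ℂ) * Bf a b) (by simp) (by simp) 0
    have h₂ := finite_support_of_trunc hN hM₂ (fun i a b => (i : ℂ) * Bf a b) (by simp) (by simp) 0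
    simp only [zero_sub] at h₁ h₂
    simp only [br0, Prod.fst_add, Pi.add_apply, map_add, mul_add]
    exact finsum_add_distrib h₁ h₂

lemma br0_mem_upperTrunc {x y : (ℤ → 𝔤) × ℂ} (hx : x ∈ upperTrunc 𝔤) (hy : y ∈ upperTrunc 𝔤) :
    br0 Bf x y ∈ upperTrunc 𝔤 := by
  obtain ⟨N, hN⟩ := hx
  obtain ⟨M, hM⟩ := hy
  refine ⟨N + M, fun n hn => finsum_eq_zero_of_forall_eq_zero fun i => ?_⟩
  rcases lt_or_ge N i with h | h
  · rw [hN i h, zero_lie]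
  · rw [hM (n - i) (by omega), lie_zero]

end Bracket

section Action

variable {𝔤 : Type} [LieRing 𝔤] [LieAlgebra ℂ 𝔤] (Bf : 𝔤 →ₗ[ℂ] 𝔤 →ₗ[ℂ] ℂ)

lemma br0_twistSubst {σ : 𝔤 →ₗ[ℂ] 𝔤} (hσ : ∀ a b, σ ⁅a, b⁆ = ⁅σ a, σ b⁆)
    (hσB : ∀ a b, Bf (σ a) (σ b) = Bf a b) {α : ℂ} (hα : α ≠ 0) (β : ℂ)
    {x y : (ℤ → 𝔤) × ℂ} (hx : x ∈ Ehat 𝔤) (hy : y ∈ Ehat 𝔤) :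
    br0 Bf (twistSubst σ α β x) (twistSubst σ α β y) = twistSubst σ α β (br0 Bf x y) := by
  have hmem {z} : z ∈ upperTrunc 𝔤 → twistSubst σ α β z ∈ upperTrunc 𝔤 :=
    twistSubst_mem_upperTrunc σ α β
  refine Ehat.induction₂ (fun a p b q hp hq => ?_) (fun y => ?_) (fun x => ?_)
    (fun x₁ hx₁ x₂ hx₂ y hy h₁ h₂ => ?_) (fun x hx y₁ hy₁ y₂ hy₂ h₁ h₂ => ?_)
    (fun c x y h => ?_) (fun c x y h => ?_) hx hy
  · have hkvec : (resDerivMul p q * Bf a b) • kvec ∈ upperTrunc 𝔤 :=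
      Submodule.smul_mem _ _ (Ehat_le_upperTrunc kvec_mem)
    rw [twistSubst_elemT, twistSubst_elemT, br0_elemT, br0_elemT, seriesMul_substK hα hp hq,
      resDerivMul_substK hα hp hq, ← hσ, hσB,
      twistSubst_add σ α β (Ehat_le_upperTrunc (elemT_mem _ _ (hp.seriesMul hq))) hkvec,
      twistSubst_elemT, twistSubst_smul, twistSubst_kvec]
  · rw [twistSubst_kvec, br0_kvec_left, br0_kvec_left, twistSubst_zero]
  · rw [twistSubst_kvec, br0_kvec_right, br0_kvec_right, twistSubst_zero]
  · rw [twistSubst_add σ α β hx₁ hx₂, br0_add_left (hmem hx₁) (hmem hx₂) (hmem hy), h₁, h₂,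
      br0_add_left hx₁ hx₂ hy,
      twistSubst_add σ α β (br0_mem_upperTrunc Bf hx₁ hy) (br0_mem_upperTrunc Bf hx₂ hy)]
  · rw [twistSubst_add σ α β hy₁ hy₂, br0_add_right (hmem hx) (hmem hy₁) (hmem hy₂), h₁, h₂,
      br0_add_right hx hy₁ hy₂,
      twistSubst_add σ α β (br0_mem_upperTrunc Bf hx hy₁) (br0_mem_upperTrunc Bf hx hy₂)]
  · rw [twistSubst_smul, br0_smul_left, h, br0_smul_left, twistSubst_smul]
  · rw [twistSubst_smul, br0_smul_right, h, br0_smul_right, twistSubst_smul]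

lemma finite_setOf_br0_twistSubst_ne_zero {ι : Type} (σ : ι → 𝔤 →ₗ[ℂ] 𝔤) (α β : ι → ℂ)
    (hfin : ∀ a b : 𝔤, {i | ⁅σ i a, b⁆ ≠ 0 ∨ Bf (σ i a) b ≠ 0}.Finite)
    {x y : (ℤ → 𝔤) × ℂ} (hx : x ∈ Ehat 𝔤) (hy : y ∈ Ehat 𝔤) :
    {i | br0 Bf (twistSubst (σ i) (α i) (β i) x) y ≠ 0}.Finite := by
  refine Ehat.induction₂ (fun a p b q hp hq => ?_) (fun y => ?_) (fun x => ?_)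
    (fun x₁ hx₁ x₂ hx₂ y hy h₁ h₂ => ?_) (fun x hx y₁ hy₁ y₂ hy₂ h₁ h₂ => ?_)
    (fun c x y h => ?_) (fun c x y h => ?_) hx hy
  · refine (hfin a b).subset fun i hi => ?_
    simp only [Set.mem_ofPred_eq] at hi ⊢
    contrapose! hi
    rw [twistSubst_elemT, br0_elemT, hi.1, hi.2, mul_zero, zero_smul, add_zero]
    exact Prod.ext (funext fun n => smul_zero _) rfl
  · simp [twistSubst_kvec, br0_kvec_left]
  · simp [br0_kvec_right]
  · refine (h₁.union h₂).subset fun i hi => ?_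
    simp only [Set.mem_ofPred_eq, Set.mem_union] at hi ⊢
    contrapose! hi
    rw [twistSubst_add _ _ _ hx₁ hx₂, br0_add_left (twistSubst_mem_upperTrunc _ _ _ hx₁)
      (twistSubst_mem_upperTrunc _ _ _ hx₂) hy, hi.1, hi.2, add_zero]
  · refine (h₁.union h₂).subset fun i hi => ?_
    simp only [Set.mem_ofPred_eq, Set.mem_union] at hi ⊢
    contrapose! hi
    rw [br0_add_right (twistSubst_mem_upperTrunc _ _ _ hx) hy₁ hy₂, hi.1, hi.2, add_zero]
  · refine h.subset fun i hi => ?_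
    simp only [Set.mem_ofPred_eq] at hi ⊢
    contrapose! hi
    rw [twistSubst_smul, br0_smul_left, hi, smul_zero]
  · refine h.subset fun i hi => ?_
    simp only [Set.mem_ofPred_eq] at hi ⊢
    contrapose! hi
    rw [br0_smul_right, hi, smul_zero]

variable {Γ : Type} [Group Γ] (ρ : Γ →* (𝔤 ≃ₗ[ℂ] 𝔤)) (Ψ : HomToG Γ)

lemma actG_one (x : (ℤ → 𝔤) × ℂ) : actG ρ Ψ 1 x = x := by
  change twistSubst ((ρ 1 : 𝔤 ≃ₗ[ℂ] 𝔤) : 𝔤 →ₗ[ℂ] 𝔤) (Ψ.invA 1) (Ψ.invB 1) x = x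
  rw [map_one, Ψ.invA_one, Ψ.invB_one]
  exact twistSubst_one_zero x

lemma actG_mul (g h : Γ) {x : (ℤ → 𝔤) × ℂ} (hx : x ∈ Ehat 𝔤) :
    actG ρ Ψ (g * h) x = actG ρ Ψ g (actG ρ Ψ h x) := by
  change twistSubst ((ρ (g * h) : 𝔤 ≃ₗ[ℂ] 𝔤) : 𝔤 →ₗ[ℂ] 𝔤) (Ψ.invA (g * h)) (Ψ.invB (g * h)) x
    = twistSubst ((ρ g : 𝔤 ≃ₗ[ℂ] 𝔤) : 𝔤 →ₗ[ℂ] 𝔤) (Ψ.invA g) (Ψ.invB g)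
      (twistSubst ((ρ h : 𝔤 ≃ₗ[ℂ] 𝔤) : 𝔤 →ₗ[ℂ] 𝔤) (Ψ.invA h) (Ψ.invB h) x)
  rw [twistSubst_twistSubst _ _ _ _ (Ψ.invA_ne_zero h) hx, Ψ.invA_mul, Ψ.invB_mul, map_mul]
  rfl

end Action

theorem gamma_action_on_completed_affine_general {Γ 𝔤 : Type} [Group Γ]
    [LieRing 𝔤] [LieAlgebra ℂ 𝔤]
    (Bf : 𝔤 →ₗ[ℂ] 𝔤 →ₗ[ℂ] ℂ)
    (ρ : Γ →* (𝔤 ≃ₗ[ℂ] 𝔤))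
    (hbr : ∀ (g : Γ) (a b : 𝔤), ρ g ⁅a, b⁆ = ⁅ρ g a, ρ g b⁆)
    (hform : ∀ (g : Γ) (a b : 𝔤), Bf (ρ g a) (ρ g b) = Bf a b)
    (hfin : ∀ a b : 𝔤, {g : Γ | ⁅ρ g a, b⁆ ≠ 0 ∨ Bf (ρ g a) b ≠ 0}.Finite)
    (Ψ : HomToG Γ) :
    -- the action preserves ĝ(∞) and is linear on it
    (∀ (g : Γ), ∀ x ∈ Ehat 𝔤, actG ρ Ψ g x ∈ Ehat 𝔤) ∧
    (∀ (g : Γ), ∀ x ∈ Ehat 𝔤, ∀ y ∈ Ehat 𝔤,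
      actG ρ Ψ g (x + y) = actG ρ Ψ g x + actG ρ Ψ g y) ∧
    (∀ (g : Γ) (c : ℂ), ∀ x ∈ Ehat 𝔤, actG ρ Ψ g (c • x) = c • actG ρ Ψ g x) ∧
    -- it is a left group action
    (∀ x ∈ Ehat 𝔤, actG ρ Ψ 1 x = x) ∧
    (∀ (g h : Γ), ∀ x ∈ Ehat 𝔤, actG ρ Ψ (g * h) x = actG ρ Ψ g (actG ρ Ψ h x)) ∧
    -- by automorphisms of the Lie algebra ĝ(∞)
    (∀ (g : Γ), ∀ x ∈ Ehat 𝔤, ∀ y ∈ Ehat 𝔤,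
      br0 Bf (actG ρ Ψ g x) (actG ρ Ψ g y) = actG ρ Ψ g (br0 Bf x y)) ∧
    -- local finiteness: [gu, v] = 0 for all but finitely many g
    (∀ x ∈ Ehat 𝔤, ∀ y ∈ Ehat 𝔤, {g : Γ | br0 Bf (actG ρ Ψ g x) y ≠ 0}.Finite) :=
  ⟨fun _ _ hx => twistSubst_mem_Ehat _ _ _ hx,
    fun _ _ hx _ hy => twistSubst_add _ _ _ (Ehat_le_upperTrunc hx) (Ehat_le_upperTrunc hy),
    fun _ c x _ => twistSubst_smul _ _ _ c x,
    fun x _ => actG_one ρ Ψ x,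
    fun g h _ hx => actG_mul ρ Ψ g h hx,
    fun g _ hx _ hy => br0_twistSubst Bf (hbr g) (hform g) (Ψ.invA_ne_zero g) _ hx hy,
    fun _ hx _ hy => finite_setOf_br0_twistSubst_ne_zero Bf (fun g => ρ g) _ _ hfin hx hy⟩

/-- proof of Proposition 3.1: Under the standing assumptions on
`(𝔤, ⟨·,·⟩, Γ)`, the assignment `g ⬝ (a⊗p(t) + λk) = ga ⊗ p(g⁻¹(t)) + λk` defines a
left action of `Γ` on the Lie algebra `ĝ(∞) = (𝔤⊗ℂ((t⁻¹))) ⊕ ℂk` (with the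
untwisted bracket `[a⊗p, b⊗q] = [a,b]⊗pq + Res_t p'q ⟨a,b⟩ k`) by Lie algebra
automorphisms, and for any `u, v ∈ ĝ(∞)`, `[gu, v] = 0` for all but finitely many
`g ∈ Γ`. -/
theorem gamma_action_on_completed_affine {Γ 𝔤 : Type} [Group Γ]
    [LieRing 𝔤] [LieAlgebra ℂ 𝔤]
    (Bf : 𝔤 →ₗ[ℂ] 𝔤 →ₗ[ℂ] ℂ)
    (hsymm : ∀ a b : 𝔤, Bf a b = Bf b a)
    (hinv : ∀ a b c : 𝔤, Bf ⁅a, b⁆ c = Bf a ⁅b, c⁆)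
    (hnondeg : ∀ a : 𝔤, (∀ b : 𝔤, Bf a b = 0) → a = 0)
    (ρ : Γ →* (𝔤 ≃ₗ[ℂ] 𝔤))
    (hbr : ∀ (g : Γ) (a b : 𝔤), ρ g ⁅a, b⁆ = ⁅ρ g a, ρ g b⁆)
    (hform : ∀ (g : Γ) (a b : 𝔤), Bf (ρ g a) (ρ g b) = Bf a b)
    (hfin : ∀ a b : 𝔤, {g : Γ | ⁅ρ g a, b⁆ ≠ 0 ∨ Bf (ρ g a) b ≠ 0}.Finite)
    (Ψ : HomToG Γ) :
    -- the action preserves ĝ(∞) and is linear on it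
    (∀ (g : Γ), ∀ x ∈ Ehat 𝔤, actG ρ Ψ g x ∈ Ehat 𝔤) ∧
    (∀ (g : Γ), ∀ x ∈ Ehat 𝔤, ∀ y ∈ Ehat 𝔤,
      actG ρ Ψ g (x + y) = actG ρ Ψ g x + actG ρ Ψ g y) ∧
    (∀ (g : Γ) (c : ℂ), ∀ x ∈ Ehat 𝔤, actG ρ Ψ g (c • x) = c • actG ρ Ψ g x) ∧
    -- it is a left group action
    (∀ x ∈ Ehat 𝔤, actG ρ Ψ 1 x = x) ∧
    (∀ (g h : Γ), ∀ x ∈ Ehat 𝔤, actG ρ Ψ (g * h) x = actG ρ Ψ g (actG ρ Ψ h x)) ∧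
    -- by automorphisms of the Lie algebra ĝ(∞)
    (∀ (g : Γ), ∀ x ∈ Ehat 𝔤, ∀ y ∈ Ehat 𝔤,
      br0 Bf (actG ρ Ψ g x) (actG ρ Ψ g y) = actG ρ Ψ g (br0 Bf x y)) ∧
    -- local finiteness: [gu, v] = 0 for all but finitely many g
    (∀ x ∈ Ehat 𝔤, ∀ y ∈ Ehat 𝔤, {g : Γ | br0 Bf (actG ρ Ψ g x) y ≠ 0}.Finite) :=
  gamma_action_on_completed_affine_general Bf ρ hbr hform hfin Ψ
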